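/- For λ ∈ ℂ with λ ≠ 0 and 27 + 58λ + 8λ² ≠ 0, define a(λ) = (27 + 87λ + 16λ²)/(λ·(27 + 58λ + 8λ²)) and b(λ) = (−3 + 16λ + 6λ²)/(4·λ²·(27 + 58λ + 8λ²)). Then for all such λ, 4·b(λ) − a(λ)² − 2·a'(λ) = (648 + 1824λ + 3157λ² + 476λ³ + 48λ⁴)/(λ²·(27 + 58λ + 8λ²)²). -/

import Mathlib

/-- Coefficient `a` of the degree-2 Picard-Fuchs equation computed for the family
of twists No. 10 (base elliptic surface with singular fibers I₁, I₂, I₅, IV at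
`-27/4, -1/2, ∞, 0`). -/
noncomputable def aTwist10 (lam : ℂ) : ℂ :=
  (27 + 87 * lam + 16 * lam ^ 2) / (lam * (27 + 58 * lam + 8 * lam ^ 2))

/-- Coefficient `b` of the degree-2 Picard-Fuchs equation for the family of twists
No. 10. -/
noncomputable def bTwist10 (lam : ℂ) : ℂ :=
  (-3 + 16 * lam + 6 * lam ^ 2) / (4 * lam ^ 2 * (27 + 58 * lam + 8 * lam ^ 2))

theorem hasDerivAt_aTwist10 {lam : ℂ} (h0 : lam ≠ 0) (h1 : 27 + 58 * lam + 8 * lam ^ 2 ≠ 0) :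
    HasDerivAt aTwist10
      (-(729 + 3132 * lam + 5262 * lam ^ 2 + 1392 * lam ^ 3 + 128 * lam ^ 4)
        / (lam ^ 2 * (27 + 58 * lam + 8 * lam ^ 2) ^ 2)) lam := by
  have hnum : HasDerivAt (fun x : ℂ => 27 + 87 * x + 16 * x ^ 2) (87 + 32 * lam) lam :=
    ((((hasDerivAt_id lam).const_mul 87).const_add 27).add
      ((hasDerivAt_pow 2 lam).const_mul 16)).congr_deriv (by ring)
  have hden : HasDerivAt (fun x : ℂ => x * (27 + 58 * x + 8 * x ^ 2))
      (27 + 116 * lam + 24 * lam ^ 2) lam :=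
    ((hasDerivAt_id lam).mul ((((hasDerivAt_id lam).const_mul 58).const_add 27).add
      ((hasDerivAt_pow 2 lam).const_mul 8))).congr_deriv (by simp only [id, Pi.add_apply]; ring)
  refine (hnum.div hden (mul_ne_zero h0 h1)).congr_deriv ?_
  field_simp
  ring

/-- The sigma invariant `4b - a² - 2a'` of the degree-2 Picard-Fuchs equation of the
family of twists No. 10. -/
theorem sigma_twist_no10 (lam : ℂ) (h0 : lam ≠ 0)
    (h1 : 27 + 58 * lam + 8 * lam ^ 2 ≠ 0) :
    4 * bTwist10 lam - (aTwist10 lam) ^ 2 - 2 * deriv aTwist10 lam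
      = (648 + 1824 * lam + 3157 * lam ^ 2 + 476 * lam ^ 3 + 48 * lam ^ 4)
        / (lam ^ 2 * (27 + 58 * lam + 8 * lam ^ 2) ^ 2) := by
  rw [(hasDerivAt_aTwist10 h0 h1).deriv, aTwist10, bTwist10]
  field_simp
  ring
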